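/- A morphism of causal-nets is a coarse-graining if and only if it can be written as a composition of finitely many morphisms each of which is an isomorphism or a fundamental coarse-graining (merging two vertices, coarse-graining two parallel edges, or contracting an edge). -/

import Mathlib

open CategoryTheory

namespace CausalNets

/-- Acyclicity condition for raw directed-multigraph data: every directed cycle
has length zero. -/
def NoCycleData (V E : Type) (s t : E → V) : Prop :=
  letI : Quiver V := ⟨fun a b => { e : E // s e = a ∧ t e = b }⟩
  ∀ (v : V) (p : Quiver.Path v v), p.length = 0

/-- A causal-net: a finite acyclic directed multigraph (isolated vertices and
parallel edges allowed). -/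
structure CausalNet where
  V : Type
  E : Type
  src : E → V
  tgt : E → V
  fintypeV : Fintype V
  fintypeE : Fintype E
  acyclic : NoCycleData V E src tgt

attribute [instance] CausalNet.fintypeV CausalNet.fintypeE

instance CausalNet.quiver (G : CausalNet) : Quiver G.V :=
  ⟨fun a b => { e : G.E // G.src e = a ∧ G.tgt e = b }⟩

/-- The category `Cau` of causal-nets: a morphism `G ⟶ H` is a functor between
the path categories `Paths G.V ⥤ Paths H.V`. -/
instance : Category CausalNet where
  Hom G H := Paths G.V ⥤ Paths H.V
  id G := 𝟭 (Paths G.V)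
  comp φ ψ := φ ⋙ ψ

variable {G H K : CausalNet}

/-- The action of a morphism of causal-nets on vertices (objects). -/
def vmap (φ : G ⟶ H) : G.V → H.V := (φ : Paths G.V ⥤ Paths H.V).obj

/-- The action of a morphism of causal-nets on directed paths (morphisms). -/
def pmap (φ : G ⟶ H) {a b : G.V} (p : Quiver.Path a b) :
    Quiver.Path (vmap φ a) (vmap φ b) :=
  (φ : Paths G.V ⥤ Paths H.V).map p

/-- The quiver arrow corresponding to an edge. -/
def edgeHom (G : CausalNet) (e : G.E) : G.src e ⟶ G.tgt e := ⟨e, rfl, rfl⟩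

/-- The directed path which is the image of the edge `e` under the morphism `φ`. -/
def edgePath (φ : G ⟶ H) (e : G.E) :
    Quiver.Path (vmap φ (G.src e)) (vmap φ (G.tgt e)) :=
  pmap φ (Quiver.Hom.toPath (edgeHom G e))

/-- The underlying edge of a quiver arrow. -/
def homEdge {a b : G.V} (f : a ⟶ b) : G.E := Subtype.val f

/-- The list of edges traversed by a directed path. -/
def pathEdges : {a b : G.V} → Quiver.Path a b → List G.E
  | _, _, Quiver.Path.nil => []
  | _, _, Quiver.Path.cons p f => pathEdges p ++ [homEdge f]

/-- The list of vertices visited by a directed path (including endpoints). -/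
def pathVertices : {a b : G.V} → Quiver.Path a b → List G.V
  | a, _, Quiver.Path.nil => [a]
  | _, b, Quiver.Path.cons p _ => pathVertices p ++ [b]

/-- An edge `e` is a contraction of `φ` if `φ(e)` has length `0`. -/
def IsContractionEdge (φ : G ⟶ H) (e : G.E) : Prop := (edgePath φ e).length = 0

/-- An edge `e` is a segment of `φ` if `φ(e)` has length `1`. -/
def IsSegmentEdge (φ : G ⟶ H) (e : G.E) : Prop := (edgePath φ e).length = 1

/-- An edge `e` is a subdivision of `φ` if `φ(e)` has length at least `2`. -/
def IsSubdivisionEdge (φ : G ⟶ H) (e : G.E) : Prop := 2 ≤ (edgePath φ e).length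

/-- `φ` maps the edge `e` to the length-one path consisting of the edge `h`. -/
def MapsToEdge (φ : G ⟶ H) (e : G.E) (h : H.E) : Prop :=
  pathEdges (edgePath φ e) = [h]

/-- A quotient: a morphism with no null-vertex and no null-edge. -/
def IsQuotientMor (φ : G ⟶ H) : Prop :=
  (∀ v : H.V, ∃ w : G.V, vmap φ w = v) ∧ ∀ h : H.E, ∃ e : G.E, MapsToEdge φ e h

/-- A coarse-graining: a quotient with no subdivision. -/
def IsCoarseGraining (φ : G ⟶ H) : Prop :=
  IsQuotientMor φ ∧ ∀ e : G.E, ¬ IsSubdivisionEdge φ e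

/-- A vertex-coarse-graining: a coarse-graining with no multiple-edge. -/
def IsVertexCoarseGraining (φ : G ⟶ H) : Prop :=
  IsCoarseGraining φ ∧
  ∀ (h : H.E) (e₁ e₂ : G.E), MapsToEdge φ e₁ h → MapsToEdge φ e₂ h → e₁ = e₂

/-- An edge-coarse-graining: a coarse-graining with no multiple-vertex and no
contraction. -/
def IsEdgeCoarseGraining (φ : G ⟶ H) : Prop :=
  IsCoarseGraining φ ∧ Function.Injective (vmap φ) ∧ ∀ e : G.E, ¬ IsContractionEdge φ e

/-- A merging: a vertex-coarse-graining with no contraction. -/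
def IsMerging (φ : G ⟶ H) : Prop :=
  IsVertexCoarseGraining φ ∧ ∀ e : G.E, ¬ IsContractionEdge φ e

/-- A fusion: a coarse-graining with no contraction. -/
def IsFusion (φ : G ⟶ H) : Prop :=
  IsCoarseGraining φ ∧ ∀ e : G.E, ¬ IsContractionEdge φ e

/-- An inclusion: a morphism injective on vertices and on directed paths
(an injective-on-objects faithful functor). -/
def IsInclusion (φ : G ⟶ H) : Prop :=
  Function.Injective (vmap φ) ∧
  ∀ (a b : G.V) (p q : Quiver.Path a b), pmap φ p = pmap φ q → p = q

/-- An embedding: an inclusion with no subdivision. -/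
def IsEmbedding (φ : G ⟶ H) : Prop :=
  IsInclusion φ ∧ ∀ e : G.E, ¬ IsSubdivisionEdge φ e

/-- An immersion: an inclusion such that images of distinct subdivision edges
share no edge. -/
def IsImmersion (φ : G ⟶ H) : Prop :=
  IsInclusion φ ∧
  ∀ e₁ e₂ : G.E, e₁ ≠ e₂ → IsSubdivisionEdge φ e₁ → IsSubdivisionEdge φ e₂ →
    ∀ h : H.E, h ∈ pathEdges (edgePath φ e₁) → h ∉ pathEdges (edgePath φ e₂)

/-- The internal vertices of a directed path (all visited vertices except the
two endpoints). -/
def internalVertices {a b : G.V} (p : Quiver.Path a b) : List G.V :=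
  ((pathVertices p).dropLast).tail

/-- A strong morphism: all internal vertices of images of subdivision edges are
null-vertices. -/
def IsStrong (φ : G ⟶ H) : Prop :=
  ∀ e : G.E, IsSubdivisionEdge φ e →
    ∀ v ∈ internalVertices (edgePath φ e), ∀ w : G.V, vmap φ w ≠ v

/-- A vertex-disjoint morphism: images of distinct subdivision edges share no
internal vertex. -/
def IsVertexDisjoint (φ : G ⟶ H) : Prop :=
  ∀ e₁ e₂ : G.E, e₁ ≠ e₂ → IsSubdivisionEdge φ e₁ → IsSubdivisionEdge φ e₂ →
    ∀ v : H.V, v ∈ internalVertices (edgePath φ e₁) → v ∉ internalVertices (edgePath φ e₂)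

/-- A topological embedding: a strong vertex-disjoint inclusion. -/
def IsTopologicalEmbedding (φ : G ⟶ H) : Prop :=
  IsInclusion φ ∧ IsStrong φ ∧ IsVertexDisjoint φ

/-- The edge `e` covers the vertex `v` if `v` occurs on the path `φ(e)`. -/
def Covers (φ : G ⟶ H) (e : G.E) (v : H.V) : Prop :=
  v ∈ pathVertices (edgePath φ e)

/-- An isolated vertex: a vertex incident to no edge. -/
def IsolatedVertex (G : CausalNet) (v : G.V) : Prop :=
  ∀ e : G.E, G.src e ≠ v ∧ G.tgt e ≠ v

/-- A subdivision morphism: a topological embedding such that every non-isolated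
vertex of the codomain is covered and every isolated vertex of the codomain is a
simple-vertex. -/
def IsSubdivisionMor (φ : G ⟶ H) : Prop :=
  IsTopologicalEmbedding φ ∧
  (∀ v : H.V, ¬ IsolatedVertex H v → ∃ e : G.E, Covers φ e v) ∧
  (∀ v : H.V, IsolatedVertex H v → ∃! w : G.V, vmap φ w = v)

theorem mapPath_length {V W : Type} [Quiver V] [Quiver W] (F : V ⥤q W) :
    ∀ {a b : V} (p : Quiver.Path a b), (F.mapPath p).length = p.length := by
  intro a b p
  induction p with
  | nil => rfl
  | cons q f ih =>
      show ((F.mapPath q).cons (F.map f)).length = (q.cons f).length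
      rw [Quiver.Path.length_cons, Quiver.Path.length_cons, ih]

theorem noCycleData_of_map {V₁ E₁ : Type} (s₁ t₁ : E₁ → V₁) (G : CausalNet)
    (f : V₁ → G.V) (g : E₁ → G.E)
    (hs : ∀ e, G.src (g e) = f (s₁ e)) (ht : ∀ e, G.tgt (g e) = f (t₁ e)) :
    NoCycleData V₁ E₁ s₁ t₁ := by
  letI : Quiver V₁ := ⟨fun a b => { e : E₁ // s₁ e = a ∧ t₁ e = b }⟩
  intro v p
  let F : V₁ ⥤q G.V :=
    { obj := f
      map := fun {a b} e =>
        ⟨g (Subtype.val e), by rw [hs, (Subtype.prop e).1], by rw [ht, (Subtype.prop e).2]⟩ }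
  have h := G.acyclic (f v) (F.mapPath p)
  rw [mapPath_length] at h
  exact h

theorem noCycleData_of_lt {V E : Type} [Preorder V] (s t : E → V)
    (hlt : ∀ e, s e < t e) : NoCycleData V E s t := by
  letI : Quiver V := ⟨fun a b => { e : E // s e = a ∧ t e = b }⟩
  have key : ∀ {a b : V} (p : Quiver.Path a b), (a = b ∧ p.length = 0) ∨ a < b := by
    intro a b p
    induction p with
    | nil => exact Or.inl ⟨rfl, rfl⟩
    | cons q f ih =>
        have hcb := hlt (Subtype.val f)
        rw [(Subtype.prop f).1, (Subtype.prop f).2] at hcb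
        rcases ih with ⟨h, _⟩ | h
        · exact Or.inr (by rw [h]; exact hcb)
        · exact Or.inr (lt_trans h hcb)
  intro v p
  rcases key p with ⟨_, h⟩ | h
  · exact h
  · exact absurd h (lt_irrefl v)

/-- The sub-causal-net spanned by a set of vertices and a set of edges. -/
noncomputable def mkSub (G : CausalNet) (Vs : Set G.V) (Es : Set G.E)
    (hs : ∀ e ∈ Es, G.src e ∈ Vs) (ht : ∀ e ∈ Es, G.tgt e ∈ Vs) : CausalNet where
  V := Vs
  E := Es
  src e := ⟨G.src e.1, hs e.1 e.2⟩
  tgt e := ⟨G.tgt e.1, ht e.1 e.2⟩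
  fintypeV := Fintype.ofFinite _
  fintypeE := Fintype.ofFinite _
  acyclic := noCycleData_of_map _ _ G Subtype.val Subtype.val (fun _ => rfl) (fun _ => rfl)

/-- The fiber of a morphism at a vertex `v` of the codomain: the sub-causal-net
of the domain on the vertices mapped to `v` and the edges mapped to the identity
path at `v`. -/
noncomputable def fiber (φ : G ⟶ H) (v : H.V) : CausalNet :=
  mkSub G {w : G.V | vmap φ w = v}
    {e : G.E | IsContractionEdge φ e ∧ vmap φ (G.src e) = v}
    (fun _ he => he.2)
    (fun e he =>
      show vmap φ (G.tgt e) = v from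
        Quiver.Path.eq_of_length_zero (edgePath φ e) he.1 ▸ he.2)

/-- The underlying undirected (simple) graph of a causal-net. -/
def undirected (G : CausalNet) : SimpleGraph G.V where
  Adj v w := v ≠ w ∧ ∃ e : G.E, (G.src e = v ∧ G.tgt e = w) ∨ (G.src e = w ∧ G.tgt e = v)
  symm := by
    constructor
    rintro v w ⟨hne, e, he⟩
    exact ⟨hne.symm, e, he.symm⟩
  loopless := by
    constructor
    intro v h
    exact h.1 rfl

/-- A causal-net is connected if its underlying undirected graph is connected. -/
def Connected (G : CausalNet) : Prop := (undirected G).Connected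

/-- A causal-Tree: a causal-net whose simplification has a tree as underlying
undirected graph.  (Since a causal-net is acyclic, the underlying undirected
graph of its simplification is exactly `undirected G`.) -/
def IsCausalTree (G : CausalNet) : Prop := (undirected G).IsTree

/-- A contraction: a vertex-coarse-graining all of whose fibers are connected. -/
def IsContractionMor (φ : G ⟶ H) : Prop :=
  IsVertexCoarseGraining φ ∧ ∀ v : H.V, Connected (fiber φ v)

/-- A simple contraction: a contraction with exactly one non-trivial fiber, that
fiber consisting of two vertices together with all edges from the first to the
second. -/
def IsSimpleContraction (φ : G ⟶ H) : Prop :=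
  IsContractionMor φ ∧
  ∃ w₁ w₂ : G.V, w₁ ≠ w₂ ∧ vmap φ w₁ = vmap φ w₂ ∧
    (∃ e : G.E, G.src e = w₁ ∧ G.tgt e = w₂) ∧
    (∀ e : G.E, IsContractionEdge φ e ↔ (G.src e = w₁ ∧ G.tgt e = w₂)) ∧
    (∀ u u' : G.V, vmap φ u = vmap φ u' →
      u = u' ∨ ((u = w₁ ∨ u = w₂) ∧ (u' = w₁ ∨ u' = w₂)))

/-- A tree-contraction: a contraction all of whose fibers are causal-Trees. -/
def IsTreeContraction (φ : G ⟶ H) : Prop :=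
  IsContractionMor φ ∧ ∀ v : H.V, IsCausalTree (fiber φ v)

/-- A directed multi-path: a causal-net whose simplification is a directed path. -/
def IsDirectedMultiPath (K : CausalNet) : Prop :=
  ∃ (a b : K.V) (p : Quiver.Path a b),
    (pathVertices p).Nodup ∧ (∀ v : K.V, v ∈ pathVertices p) ∧
    ∀ e : K.E, ∃ h ∈ pathEdges p, K.src e = K.src h ∧ K.tgt e = K.tgt h

/-- A path-contraction: a vertex-coarse-graining all of whose fibers are
directed multi-paths. -/
def IsPathContraction (φ : G ⟶ H) : Prop :=
  IsVertexCoarseGraining φ ∧ ∀ v : H.V, IsDirectedMultiPath (fiber φ v)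

/-- A point: a causal-net with exactly one vertex and no edges. -/
def IsPoint (A : CausalNet) : Prop := (∃ v : A.V, ∀ w : A.V, w = v) ∧ IsEmpty A.E

/-- Reachability: there is a directed path from `a` to `b`. -/
def Reaches (G : CausalNet) (a b : G.V) : Prop := Nonempty (Quiver.Path a b)

/-- A coclique: a set of vertices no two distinct members of which are
comparable under the reachability order. -/
def IsCoclique (G : CausalNet) (S : Set G.V) : Prop :=
  ∀ a ∈ S, ∀ b ∈ S, a ≠ b → ¬ Reaches G a b

/-- A multi-edge: the nonempty set of all edges from one fixed vertex to another. -/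
def IsMultiEdge (G : CausalNet) (s : Set G.E) : Prop :=
  s.Nonempty ∧ ∃ a b : G.V, s = {e : G.E | G.src e = a ∧ G.tgt e = b}

/-- The pair of vertices whose multi-edge is contracted by a simple contraction. -/
def ContractedPair (φ : G ⟶ H) (w₁ w₂ : G.V) : Prop :=
  w₁ ≠ w₂ ∧ vmap φ w₁ = vmap φ w₂ ∧ (∃ e : G.E, G.src e = w₁ ∧ G.tgt e = w₂) ∧
  ∀ e : G.E, IsContractionEdge φ e ↔ (G.src e = w₁ ∧ G.tgt e = w₂)

/-- Two causal-nets are isomorphic in `Cau`. -/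
def IsIsomorphicTo (A B : CausalNet) : Prop := ∃ φ : A ⟶ B, IsIso φ

/-- A simple causal-net: at most one edge between any ordered pair of vertices. -/
def IsSimpleNet (G : CausalNet) : Prop :=
  ∀ e₁ e₂ : G.E, G.src e₁ = G.src e₂ → G.tgt e₁ = G.tgt e₂ → e₁ = e₂

/-- A harmonic causal-net: every fusion out of it is an isomorphism. -/
def Harmonic (G : CausalNet) : Prop :=
  ∀ (H : CausalNet) (φ : G ⟶ H), IsFusion φ → IsIso φ

/-- A hamiltonian path: a directed path visiting every vertex exactly once. -/
def HasHamiltonianPath (G : CausalNet) : Prop :=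
  ∃ (a b : G.V) (p : Quiver.Path a b),
    (pathVertices p).Nodup ∧ ∀ v : G.V, v ∈ pathVertices p

/-- Morphisms which can be written as a composition of finitely many morphisms
each satisfying `P`. -/
inductive IsCompOf (P : ∀ ⦃A B : CausalNet⦄, (A ⟶ B) → Prop) :
    ∀ {A B : CausalNet}, (A ⟶ B) → Prop
  | of {A B : CausalNet} (φ : A ⟶ B) : P φ → IsCompOf P φ
  | comp {A B C : CausalNet} (φ : A ⟶ B) (ψ : B ⟶ C) :
      IsCompOf P φ → IsCompOf P ψ → IsCompOf P (φ ≫ ψ)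

def IsMergeTwoVertices {G H : CausalNet} (φ : G ⟶ H) : Prop :=
  IsMerging φ ∧ (∀ h : H.E, ∃! e : G.E, MapsToEdge φ e h) ∧
  ∃ w₁ w₂ : G.V, w₁ ≠ w₂ ∧ vmap φ w₁ = vmap φ w₂ ∧
    ∀ u u' : G.V, vmap φ u = vmap φ u' →
      u = u' ∨ ((u = w₁ ∨ u = w₂) ∧ (u' = w₁ ∨ u' = w₂))

def IsCoarseGrainTwoParallelEdges {G H : CausalNet} (φ : G ⟶ H) : Prop :=
  IsEdgeCoarseGraining φ ∧ Function.Bijective (vmap φ) ∧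
  ∃ e₁ e₂ : G.E, e₁ ≠ e₂ ∧ G.src e₁ = G.src e₂ ∧ G.tgt e₁ = G.tgt e₂ ∧
    (∃ h : H.E, MapsToEdge φ e₁ h ∧ MapsToEdge φ e₂ h) ∧
    ∀ (h : H.E) (d d' : G.E), MapsToEdge φ d h → MapsToEdge φ d' h →
      d = d' ∨ ((d = e₁ ∨ d = e₂) ∧ (d' = e₁ ∨ d' = e₂))

def IsContractOneEdge {G H : CausalNet} (φ : G ⟶ H) : Prop :=
  IsSimpleContraction φ ∧
  ∀ w₁ w₂ : G.V, ContractedPair φ w₁ w₂ → ∃! e : G.E, G.src e = w₁ ∧ G.tgt e = w₂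

def IsFundamentalCoarseGraining : ∀ ⦃A B : CausalNet⦄, (A ⟶ B) → Prop :=
  fun _ _ φ => IsIso φ ∨ IsMergeTwoVertices φ ∨ IsCoarseGrainTwoParallelEdges φ ∨
    IsContractOneEdge φ

/-!
Coarse-grainings are closed under composition and contain the isomorphisms, which gives one
direction. Conversely, if a coarse-graining `φ : G ⟶ H` is constant on the fibers of a
coarse-graining `μ : G ⟶ K`, then `φ` factors as `μ ≫ ψ` with `ψ` again a coarse-graining.
So it suffices to find, whenever `φ` is not an isomorphism, a fundamental `μ` of this kind that
makes `G` smaller, and to induct on the number of vertices and edges: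
* if `φ` sends two parallel edges to the same path, merge these edges;
* otherwise, if `φ` contracts some edge, contract a contracted edge `e` whose endpoints have
  minimal rank difference; then `e` is the only path from its source to its target, so the
  contracted net is still acyclic;
* otherwise, if `φ` identifies two vertices, merge them; the result is acyclic since it maps
  onto `H` edge by edge.
If none of these applies, the identity of `G` is constant on the fibers of `φ`; this yields a
left inverse of `φ`, which is also a right inverse since coarse-grainings are epimorphisms.
-/

section Paths

@[simp]
theorem pathEdges_nil (a : G.V) : pathEdges (Quiver.Path.nil : Quiver.Path a a) = [] := by
  simp [pathEdges]

@[simp]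
theorem pathEdges_cons {a b c : G.V} (p : Quiver.Path a b) (f : b ⟶ c) :
    pathEdges (p.cons f) = pathEdges p ++ [homEdge f] := by
  simp [pathEdges]

theorem pathEdges_toPath {a b : G.V} (f : a ⟶ b) : pathEdges f.toPath = [homEdge f] := by
  simp [Quiver.Hom.toPath]

theorem pathEdges_comp {a b c : G.V} (p : Quiver.Path a b) (q : Quiver.Path b c) :
    pathEdges (p.comp q) = pathEdges p ++ pathEdges q := by
  induction q with
  | nil => simp
  | cons q f ih => simp [ih]

theorem length_pathEdges {a b : G.V} (p : Quiver.Path a b) : (pathEdges p).length = p.length := by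
  induction p with
  | nil => simp
  | cons p f ih => simp [ih]

theorem length_cast {U : Type*} [Quiver U] {a b a' b' : U} (ha : a = a') (hb : b = b')
    (p : Quiver.Path a b) : (p.cast ha hb).length = p.length := by
  subst ha hb; rfl

theorem heq_of_length_eq_zero {a b a' b' : G.V} {p : Quiver.Path a b} {q : Quiver.Path a' b'}
    (ha : a = a') (hp : p.length = 0) (hq : q.length = 0) : HEq p q := by
  subst ha
  cases p with
  | nil => cases q with
    | nil => rfl
    | cons => simp at hq
  | cons => simp at hp

theorem heq_toPath_of_pathEdges_eq {a b : G.V} {p : Quiver.Path a b} {h : G.E}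
    (hp : pathEdges p = [h]) : G.src h = a ∧ G.tgt h = b ∧ HEq p (edgeHom G h).toPath := by
  cases p with
  | nil => simp at hp
  | cons q f =>
    obtain ⟨hq, rfl⟩ : pathEdges q = [] ∧ homEdge f = h := by
      simpa [List.append_eq_singleton_iff] using hp
    cases q with
    | nil => obtain ⟨e, rfl, rfl⟩ := f; exact ⟨rfl, rfl, HEq.rfl⟩
    | cons => simp at hq

end Paths

section Morphisms

theorem vmap_comp (φ : G ⟶ H) (ψ : H ⟶ K) (a : G.V) :
    vmap (φ ≫ ψ) a = vmap ψ (vmap φ a) :=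
  rfl

theorem pmap_nil (φ : G ⟶ H) (a : G.V) :
    pmap φ (Quiver.Path.nil : Quiver.Path a a) = Quiver.Path.nil :=
  φ.map_id a

theorem pmap_comp (φ : G ⟶ H) {a b c : G.V} (p : Quiver.Path a b) (q : Quiver.Path b c) :
    pmap φ (p.comp q) = (pmap φ p).comp (pmap φ q) :=
  φ.map_comp p q

theorem pathEdges_pmap (φ : G ⟶ H) {a b : G.V} (p : Quiver.Path a b) :
    pathEdges (pmap φ p) = (pathEdges p).flatMap fun e => pathEdges (edgePath φ e) := by
  induction p with
  | nil => simp [pmap_nil]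
  | cons p f ih =>
    obtain ⟨e, rfl, rfl⟩ := f
    rw [← Quiver.Path.comp_toPath_eq_cons, pmap_comp, pathEdges_comp, ih]
    simp [homEdge, edgePath, edgeHom]

theorem length_pmap (φ : G ⟶ H) {a b : G.V} (p : Quiver.Path a b) :
    (pmap φ p).length = ((pathEdges p).map fun e => (edgePath φ e).length).sum := by
  simp [← length_pathEdges, pathEdges_pmap, List.length_flatMap]

theorem hom_ext {φ ψ : G ⟶ H} (hv : ∀ a, vmap φ a = vmap ψ a)
    (he : ∀ e, HEq (edgePath φ e) (edgePath ψ e)) : φ = ψ :=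
  Paths.ext_functor (funext hv) fun _ _ f =>
    (conj_eqToHom_iff_heq (C := Paths H.V) _ _ _ (hv _)).2 <| by
      obtain ⟨e, rfl, rfl⟩ := f
      exact he e

def mkHom (fv : G.V → H.V) (fe : ∀ e : G.E, Quiver.Path (fv (G.src e)) (fv (G.tgt e))) :
    G ⟶ H :=
  Paths.lift
    { obj := fv
      map := fun f => (fe (homEdge f)).cast (congrArg fv f.2.1) (congrArg fv f.2.2) }

theorem edgePath_mkHom (fv : G.V → H.V)
    (fe : ∀ e : G.E, Quiver.Path (fv (G.src e)) (fv (G.tgt e))) (e : G.E) :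
    edgePath (mkHom fv fe) e = fe e :=
  Paths.lift_toPath _ _

end Morphisms

section Acyclic

theorem length_eq_zero_of_eq {a b : G.V} (p : Quiver.Path a b) (h : a = b) : p.length = 0 := by
  subst h
  exact G.acyclic a p

theorem src_ne_tgt (e : G.E) : G.src e ≠ G.tgt e := fun h => by
  simpa using length_eq_zero_of_eq (edgeHom G e).toPath h

theorem Reaches.refl (a : G.V) : Reaches G a a := ⟨.nil⟩

theorem Reaches.trans {a b c : G.V} : Reaches G a b → Reaches G b c → Reaches G a c :=
  fun ⟨p⟩ ⟨q⟩ => ⟨p.comp q⟩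

theorem reaches_src_tgt (e : G.E) : Reaches G (G.src e) (G.tgt e) := ⟨(edgeHom G e).toPath⟩

theorem Reaches.antisymm {a b : G.V} : Reaches G a b → Reaches G b a → a = b :=
  fun ⟨p⟩ ⟨q⟩ => p.eq_of_length_zero (by
    have := length_eq_zero_of_eq (p.comp q) rfl
    rw [Quiver.Path.length_comp] at this
    omega)

theorem not_reaches_tgt_src (e : G.E) : ¬ Reaches G (G.tgt e) (G.src e) :=
  fun h => src_ne_tgt e ((reaches_src_tgt e).antisymm h)

noncomputable def rank (G : CausalNet) (v : G.V) : ℕ := {u | Reaches G u v}.ncard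

theorem rank_le_rank {a b : G.V} (h : Reaches G a b) : rank G a ≤ rank G b :=
  Set.ncard_le_ncard fun _ hu => Reaches.trans hu h

theorem rank_lt_rank {a b : G.V} (h : Reaches G a b) (hne : a ≠ b) : rank G a < rank G b :=
  Set.ncard_lt_ncard
    ⟨fun _ hu => Reaches.trans hu h, fun hsub => hne (h.antisymm (hsub (Reaches.refl b)))⟩

end Acyclic

section CoarseGraining

theorem MapsToEdge.vmap_src {φ : G ⟶ H} {e : G.E} {h : H.E} (hm : MapsToEdge φ e h) :
    vmap φ (G.src e) = H.src h :=
  (heq_toPath_of_pathEdges_eq hm).1.symm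

theorem MapsToEdge.vmap_tgt {φ : G ⟶ H} {e : G.E} {h : H.E} (hm : MapsToEdge φ e h) :
    vmap φ (G.tgt e) = H.tgt h :=
  (heq_toPath_of_pathEdges_eq hm).2.1.symm

theorem MapsToEdge.heq {φ : G ⟶ H} {e : G.E} {h : H.E} (hm : MapsToEdge φ e h) :
    HEq (edgePath φ e) (edgeHom H h).toPath :=
  (heq_toPath_of_pathEdges_eq hm).2.2

theorem MapsToEdge.length_eq_one {φ : G ⟶ H} {e : G.E} {h : H.E} (hm : MapsToEdge φ e h) :
    (edgePath φ e).length = 1 := by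
  rw [← length_pathEdges, hm, List.length_singleton]

theorem MapsToEdge.not_isContractionEdge {φ : G ⟶ H} {e : G.E} {h : H.E}
    (hm : MapsToEdge φ e h) : ¬ IsContractionEdge φ e := by
  simp [IsContractionEdge, hm.length_eq_one]

theorem isContractionEdge_or_exists_mapsToEdge {φ : G ⟶ H} {e : G.E}
    (he : ¬ IsSubdivisionEdge φ e) : IsContractionEdge φ e ∨ ∃ h, MapsToEdge φ e h := by
  rw [IsSubdivisionEdge, not_le, Nat.lt_succ_iff, Nat.le_one_iff_eq_zero_or_eq_one] at he
  refine he.imp id fun h1 => List.length_eq_one_iff.1 ?_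
  rw [length_pathEdges, h1]

theorem IsContractionEdge.comp {φ : G ⟶ H} {e : G.E} (he : IsContractionEdge φ e)
    (ψ : H ⟶ K) : IsContractionEdge (φ ≫ ψ) e := by
  have : pathEdges (edgePath φ e) = [] := by
    rw [← List.length_eq_zero_iff, length_pathEdges]; exact he
  change (pmap ψ (edgePath φ e)).length = 0
  rw [length_pmap, this]
  rfl

theorem MapsToEdge.pathEdges_comp {φ : G ⟶ H} {e : G.E} {h : H.E} (hm : MapsToEdge φ e h)
    (ψ : H ⟶ K) : pathEdges (edgePath (φ ≫ ψ) e) = pathEdges (edgePath ψ h) := by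
  change pathEdges (pmap ψ (edgePath φ e)) = _
  rw [pathEdges_pmap, show pathEdges (edgePath φ e) = [h] from hm]
  simp

theorem MapsToEdge.length_comp {φ : G ⟶ H} {e : G.E} {h : H.E} (hm : MapsToEdge φ e h)
    (ψ : H ⟶ K) : (edgePath (φ ≫ ψ) e).length = (edgePath ψ h).length := by
  rw [← length_pathEdges, hm.pathEdges_comp, length_pathEdges]

theorem MapsToEdge.heq_comp {φ : G ⟶ H} {e : G.E} {h : H.E} (hm : MapsToEdge φ e h)
    (ψ : H ⟶ K) : HEq (edgePath (φ ≫ ψ) e) (edgePath ψ h) := by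
  have hpmap : ∀ {a b : H.V} (p : Quiver.Path a b), a = H.src h → b = H.tgt h →
      HEq p (edgeHom H h).toPath → HEq (pmap ψ p) (edgePath ψ h) := by
    rintro a b p rfl rfl hp
    cases hp
    rfl
  exact hpmap _ hm.vmap_src hm.vmap_tgt hm.heq

theorem MapsToEdge.comp {φ : G ⟶ H} {ψ : H ⟶ K} {e : G.E} {h : H.E} {k : K.E}
    (hm : MapsToEdge φ e h) (hk : MapsToEdge ψ h k) : MapsToEdge (φ ≫ ψ) e k :=
  (hm.pathEdges_comp ψ).trans hk

theorem IsCoarseGraining.comp {φ : G ⟶ H} {ψ : H ⟶ K} (hφ : IsCoarseGraining φ)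
    (hψ : IsCoarseGraining ψ) : IsCoarseGraining (φ ≫ ψ) := by
  refine ⟨⟨fun v => ?_, fun k => ?_⟩, fun e => ?_⟩
  · obtain ⟨w, rfl⟩ := hψ.1.1 v
    obtain ⟨u, rfl⟩ := hφ.1.1 w
    exact ⟨u, rfl⟩
  · obtain ⟨h, hk⟩ := hψ.1.2 k
    obtain ⟨e, he⟩ := hφ.1.2 h
    exact ⟨e, he.comp hk⟩
  · rcases isContractionEdge_or_exists_mapsToEdge (hφ.2 e) with hc | ⟨h, hm⟩
    · have := hc.comp ψ
      unfold IsContractionEdge at this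
      unfold IsSubdivisionEdge
      omega
    · unfold IsSubdivisionEdge
      rw [hm.length_comp]
      exact hψ.2 h

theorem pathEdges_edgePath_id (e : G.E) : pathEdges (edgePath (𝟙 G) e) = [e] :=
  pathEdges_toPath _

theorem length_edgePath_id (e : G.E) : (edgePath (𝟙 G) e).length = 1 := rfl

theorem not_isContractionEdge_of_comp_eq_id {φ : G ⟶ H} {ψ : H ⟶ G} (h : φ ≫ ψ = 𝟙 G)
    (e : G.E) : ¬ IsContractionEdge φ e := fun he => by
  have := he.comp ψ
  rw [h, IsContractionEdge, length_edgePath_id] at this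
  exact one_ne_zero this

theorem length_le_length_pmap {ψ : H ⟶ K} (hψ : ∀ e, ¬ IsContractionEdge ψ e) {a b : H.V}
    (p : Quiver.Path a b) : p.length ≤ (pmap ψ p).length := by
  rw [length_pmap, ← length_pathEdges, ← List.length_map (fun e => (edgePath ψ e).length)]
  refine List.length_le_sum_of_one_le _ fun n hn => ?_
  obtain ⟨e, -, rfl⟩ := List.mem_map.1 hn
  exact Nat.one_le_iff_ne_zero.2 (hψ e)

theorem not_isSubdivisionEdge_of_comp_eq_id {φ : G ⟶ H} {ψ : H ⟶ G} (h : φ ≫ ψ = 𝟙 G)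
    (hψ : ∀ e, ¬ IsContractionEdge ψ e) (e : G.E) : ¬ IsSubdivisionEdge φ e := by
  have hle : (edgePath φ e).length ≤ (edgePath (φ ≫ ψ) e).length :=
    length_le_length_pmap hψ _
  have hid : (edgePath (φ ≫ ψ) e).length = 1 := by rw [h]; rfl
  unfold IsSubdivisionEdge
  omega

theorem IsCoarseGraining.of_isIso (φ : G ⟶ H) [IsIso φ] : IsCoarseGraining φ := by
  have hφ := not_isContractionEdge_of_comp_eq_id (IsIso.hom_inv_id φ)
  have hψ := not_isContractionEdge_of_comp_eq_id (IsIso.inv_hom_id φ)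
  refine ⟨⟨fun v => ⟨vmap (inv φ) v, ?_⟩, fun h => ?_⟩,
    not_isSubdivisionEdge_of_comp_eq_id (IsIso.hom_inv_id φ) hψ⟩
  · rw [← vmap_comp, IsIso.inv_hom_id]; rfl
  · obtain ⟨e, he⟩ := (isContractionEdge_or_exists_mapsToEdge
      (not_isSubdivisionEdge_of_comp_eq_id (IsIso.inv_hom_id φ) hφ h)).resolve_left (hψ h)
    refine ⟨e, ?_⟩
    rw [MapsToEdge, ← he.pathEdges_comp, IsIso.inv_hom_id, pathEdges_edgePath_id]

theorem IsFundamentalCoarseGraining.isCoarseGraining {φ : G ⟶ H}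
    (hφ : IsFundamentalCoarseGraining φ) : IsCoarseGraining φ := by
  rcases hφ with hφ | hφ | hφ | hφ
  exacts [.of_isIso φ, hφ.1.1.1, hφ.1.1, hφ.1.1.1.1]

theorem IsCompOf.isCoarseGraining {φ : G ⟶ H} (h : IsCompOf IsFundamentalCoarseGraining φ) :
    IsCoarseGraining φ := by
  induction h with
  | of φ hφ => exact hφ.isCoarseGraining
  | comp φ ψ _ _ ih₁ ih₂ => exact ih₁.comp ih₂

end CoarseGraining

section Factorization

structure IsConstantOnFibers (μ : G ⟶ K) (φ : G ⟶ H) : Prop where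
  vmap_eq : ∀ a b, vmap μ a = vmap μ b → vmap φ a = vmap φ b
  heq_edgePath : ∀ d d' h, MapsToEdge μ d h → MapsToEdge μ d' h →
    HEq (edgePath φ d) (edgePath φ d')
  isContractionEdge : ∀ d, IsContractionEdge μ d → IsContractionEdge φ d

variable {μ : G ⟶ K} {φ : G ⟶ H}

noncomputable def IsConstantOnFibers.lift (hφ : IsConstantOnFibers μ φ)
    (hμ : IsQuotientMor μ) : K ⟶ H :=
  mkHom (fun v => vmap φ (hμ.1 v).choose) fun h =>
    (edgePath φ (hμ.2 h).choose).cast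
      (hφ.vmap_eq _ _ (by rw [(hμ.2 h).choose_spec.vmap_src, (hμ.1 _).choose_spec]))
      (hφ.vmap_eq _ _ (by rw [(hμ.2 h).choose_spec.vmap_tgt, (hμ.1 _).choose_spec]))

theorem IsConstantOnFibers.comp_lift (hφ : IsConstantOnFibers μ φ) (hμ : IsCoarseGraining μ) :
    μ ≫ hφ.lift hμ.1 = φ := by
  have hv : ∀ a, vmap (μ ≫ hφ.lift hμ.1) a = vmap φ a := fun a =>
    hφ.vmap_eq _ _ (hμ.1.1 (vmap μ a)).choose_spec
  refine hom_ext hv fun d => ?_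
  rcases isContractionEdge_or_exists_mapsToEdge (hμ.2 d) with hc | ⟨h, hm⟩
  · exact heq_of_length_eq_zero (hv _) (hc.comp _) (hφ.isContractionEdge d hc)
  · refine (hm.heq_comp _).trans ?_
    rw [IsConstantOnFibers.lift, edgePath_mkHom]
    exact (Quiver.Path.cast_heq _ _ _).trans
      (hφ.heq_edgePath _ _ h (hμ.1.2 h).choose_spec hm)

theorem IsCoarseGraining.of_comp (hμ : IsCoarseGraining μ) {ψ : K ⟶ H}
    (h : IsCoarseGraining (μ ≫ ψ)) : IsCoarseGraining ψ := by
  refine ⟨⟨fun v => ?_, fun k => ?_⟩, fun h' => ?_⟩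
  · obtain ⟨w, hw⟩ := h.1.1 v
    exact ⟨vmap μ w, hw⟩
  · obtain ⟨d, hd⟩ := h.1.2 k
    rcases isContractionEdge_or_exists_mapsToEdge (hμ.2 d) with hc | ⟨h', hm⟩
    · exact absurd (hc.comp ψ) hd.not_isContractionEdge
    · exact ⟨h', (hm.pathEdges_comp ψ).symm.trans hd⟩
  · obtain ⟨d, hd⟩ := hμ.1.2 h'
    unfold IsSubdivisionEdge
    rw [← hd.length_comp]
    exact h.2 d

theorem IsQuotientMor.cancel_left (hμ : IsQuotientMor μ) {α β : K ⟶ H}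
    (h : μ ≫ α = μ ≫ β) : α = β := by
  refine hom_ext (fun v => ?_) fun k => ?_
  · obtain ⟨w, rfl⟩ := hμ.1 v
    exact congrArg (vmap · w) h
  · obtain ⟨d, hd⟩ := hμ.2 k
    have : HEq (edgePath (μ ≫ α) d) (edgePath (μ ≫ β) d) := by rw [h]
    exact (hd.heq_comp α).symm.trans (this.trans (hd.heq_comp β))

theorem IsConstantOnFibers.exists_comp_eq (hφ : IsConstantOnFibers μ φ)
    (hμ : IsCoarseGraining μ) (hφc : IsCoarseGraining φ) :
    ∃ ψ : K ⟶ H, IsCoarseGraining ψ ∧ μ ≫ ψ = φ :=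
  ⟨hφ.lift hμ.1, hμ.of_comp ((hφ.comp_lift hμ).symm ▸ hφc), hφ.comp_lift hμ⟩

theorem IsCoarseGraining.isIso_of_isConstantOnFibers_id (hφ : IsCoarseGraining φ)
    (hid : IsConstantOnFibers φ (𝟙 G)) : IsIso φ := by
  refine ⟨hid.lift hφ.1, hid.comp_lift hφ, hφ.1.cancel_left ?_⟩
  rw [← Category.assoc, hid.comp_lift hφ, Category.id_comp, Category.comp_id]

end Factorization

theorem notMem_compl_singleton {α : Type*} (a : α) : a ∉ ({a}ᶜ : Set α) :=
  Set.notMem_compl_iff.2 rfl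

section Reattach

variable {V : Type} [Finite V]

def ReattachAcyclic (r : G.V → V) (S : Set G.E) : Prop :=
  NoCycleData V S (fun d => r (G.src d)) (fun d => r (G.tgt d))

noncomputable def reattach (r : G.V → V) (S : Set G.E) (hS : ReattachAcyclic r S) :
    CausalNet where
  V := V
  E := S
  src d := r (G.src d)
  tgt d := r (G.tgt d)
  fintypeV := Fintype.ofFinite V
  fintypeE := Fintype.ofFinite S
  acyclic := hS

theorem reattachAcyclic_id (S : Set G.E) : ReattachAcyclic id S :=
  noCycleData_of_map _ _ G id Subtype.val (fun _ => rfl) (fun _ => rfl)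

variable (r : G.V → V) (S : Set G.E) (hS : ReattachAcyclic r S)

open Classical in
noncomputable def reattachHom
    (g : ∀ d ∉ S, @Quiver.Path (reattach r S hS).V _ (r (G.src d)) (r (G.tgt d))) :
    G ⟶ reattach r S hS :=
  mkHom (H := reattach r S hS) r fun d =>
    if hd : d ∈ S then (edgeHom (reattach r S hS) ⟨d, hd⟩).toPath else g d hd

variable {r S hS}
variable {g : ∀ d ∉ S, @Quiver.Path (reattach r S hS).V _ (r (G.src d)) (r (G.tgt d))}

theorem edgePath_reattachHom_of_mem {d : G.E} (hd : d ∈ S) :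
    edgePath (reattachHom r S hS g) d = (edgeHom (reattach r S hS) ⟨d, hd⟩).toPath :=
  (edgePath_mkHom _ _ d).trans (dif_pos hd)

theorem edgePath_reattachHom_of_notMem {d : G.E} (hd : d ∉ S) :
    edgePath (reattachHom r S hS g) d = g d hd :=
  (edgePath_mkHom _ _ d).trans (dif_neg hd)

theorem mapsToEdge_reattachHom_of_mem {d : G.E} (hd : d ∈ S) :
    MapsToEdge (reattachHom r S hS g) d ⟨d, hd⟩ := by
  unfold MapsToEdge
  rw [edgePath_reattachHom_of_mem hd]
  exact pathEdges_toPath _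

theorem eq_of_mapsToEdge_reattachHom {d : G.E} {h : (reattach r S hS).E}
    (hm : MapsToEdge (reattachHom r S hS g) d h) (hd : d ∈ S) : h = ⟨d, hd⟩ := by
  unfold MapsToEdge at hm
  rw [edgePath_reattachHom_of_mem hd] at hm
  exact (List.singleton_inj.1 ((pathEdges_toPath _).symm.trans hm)).symm

theorem mapsToEdge_reattachHom_iff_of_notMem {d : G.E} {h : (reattach r S hS).E} (hd : d ∉ S) :
    MapsToEdge (reattachHom r S hS g) d h ↔ pathEdges (g d hd) = [h] := by
  unfold MapsToEdge
  rw [edgePath_reattachHom_of_notMem hd]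
  exact Iff.rfl

theorem not_isContractionEdge_reattachHom_of_mem {d : G.E} (hd : d ∈ S) :
    ¬ IsContractionEdge (reattachHom r S hS g) d :=
  (mapsToEdge_reattachHom_of_mem hd).not_isContractionEdge

theorem isCoarseGraining_reattachHom (hr : Function.Surjective r)
    (hg : ∀ d hd, (g d hd).length ≤ 1) : IsCoarseGraining (reattachHom r S hS g) := by
  refine ⟨⟨hr, fun h => ⟨h.1, mapsToEdge_reattachHom_of_mem h.2⟩⟩, fun d => ?_⟩
  unfold IsSubdivisionEdge
  by_cases hd : d ∈ S
  · rw [edgePath_reattachHom_of_mem hd]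
    change ¬ 2 ≤ 1
    omega
  · rw [edgePath_reattachHom_of_notMem hd]
    exact not_le.2 (Nat.lt_succ_of_le (hg d hd))

end Reattach

section Collapse

variable {α : Type*} {w₁ w₂ : α} (hne : w₁ ≠ w₂)

open Classical in
noncomputable def collapse (v : α) : {v : α // v ≠ w₂} :=
  if h : v = w₂ then ⟨w₁, hne⟩ else ⟨v, h⟩

theorem collapse_of_ne {v : α} (h : v ≠ w₂) : collapse hne v = ⟨v, h⟩ := dif_neg h

theorem collapse_right : collapse hne w₂ = ⟨w₁, hne⟩ := dif_pos rfl

theorem collapse_left : collapse hne w₁ = ⟨w₁, hne⟩ := collapse_of_ne hne hne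

theorem collapse_surjective : Function.Surjective (collapse hne) :=
  fun v => ⟨v, collapse_of_ne hne v.2⟩

theorem collapse_val_eq {v : α} :
    (collapse hne v).1 = v ∨ (v = w₂ ∧ (collapse hne v).1 = w₁) := by
  by_cases h : v = w₂
  · subst h; exact .inr ⟨rfl, congrArg Subtype.val (collapse_right hne)⟩
  · exact .inl (congrArg Subtype.val (collapse_of_ne hne h))

theorem eq_or_mem_of_collapse_eq {a b : α} (h : collapse hne a = collapse hne b) :
    a = b ∨ ((a = w₁ ∨ a = w₂) ∧ (b = w₁ ∨ b = w₂)) := by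
  have h' := congrArg Subtype.val h
  rcases collapse_val_eq hne (v := a) with ha | ⟨ha, ha'⟩ <;>
    rcases collapse_val_eq hne (v := b) with hb | ⟨hb, hb'⟩
  · exact .inl (ha.symm.trans (h'.trans hb))
  · exact .inr ⟨.inl (ha.symm.trans (h'.trans hb')), .inr hb⟩
  · exact .inr ⟨.inr ha, .inl (hb.symm.trans (h'.symm.trans ha'))⟩
  · exact .inl (ha.trans hb.symm)

theorem apply_collapse {β : Type*} {f : α → β} (hf : f w₁ = f w₂) (v : α) :
    f (collapse hne v).1 = f v := by
  rcases collapse_val_eq hne (v := v) with h | ⟨rfl, h⟩ <;> rw [h]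
  exact hf

theorem apply_eq_of_collapse_eq {β : Type*} {f : α → β}
    (hf : f w₁ = f w₂) {a b : α} (h : collapse hne a = collapse hne b) : f a = f b := by
  rw [← apply_collapse hne hf a, h, apply_collapse hne hf b]

theorem card_collapse_lt [Finite α] : Nat.card {v : α // v ≠ w₂} < Nat.card α :=
  Finite.card_subtype_lt (not_not.2 rfl)

end Collapse

noncomputable def size (G : CausalNet) : ℕ := Nat.card G.V + Nat.card G.E

theorem size_reattach {V : Type} [Finite V] (r : G.V → V) (S : Set G.E)
    (hS : ReattachAcyclic r S) : size (reattach r S hS) = Nat.card V + Nat.card S := rfl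

section ParallelEdges

variable {e₁ e₂ : G.E} (hne : e₁ ≠ e₂) (hs : G.src e₁ = G.src e₂)
  (ht : G.tgt e₁ = G.tgt e₂)

noncomputable def mergeParallelEdges : G ⟶ reattach id {e₂}ᶜ (reattachAcyclic_id _) :=
  reattachHom id {e₂}ᶜ _ fun d hd =>
    have hd : d = e₂ := Set.notMem_compl_iff.1 hd
    Quiver.Hom.toPath (V := (reattach id {e₂}ᶜ (reattachAcyclic_id _)).V)
      ⟨⟨e₁, hne⟩, hd ▸ hs, hd ▸ ht⟩

theorem mapsToEdge_mergeParallelEdges_right :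
    MapsToEdge (mergeParallelEdges hne hs ht) e₂ ⟨e₁, hne⟩ :=
  (mapsToEdge_reattachHom_iff_of_notMem (notMem_compl_singleton e₂)).2 (pathEdges_toPath _)

theorem eq_or_of_mapsToEdge_mergeParallelEdges {d : G.E} {h : (reattach id {e₂}ᶜ _).E}
    (hm : MapsToEdge (mergeParallelEdges hne hs ht) d h) :
    h.1 = d ∨ (d = e₂ ∧ h.1 = e₁) := by
  by_cases hd : d = e₂
  · subst d
    have := (pathEdges_toPath _).symm.trans
      ((mapsToEdge_reattachHom_iff_of_notMem (notMem_compl_singleton e₂)).1 hm)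
    exact .inr ⟨rfl, congrArg Subtype.val (List.singleton_inj.1 this).symm⟩
  · exact .inl (congrArg Subtype.val (eq_of_mapsToEdge_reattachHom hm hd))

theorem exists_mapsToEdge_mergeParallelEdges (d : G.E) :
    ∃ h, MapsToEdge (mergeParallelEdges hne hs ht) d h := by
  by_cases hd : d = e₂
  · subst d
    exact ⟨_, mapsToEdge_mergeParallelEdges_right hne hs ht⟩
  · exact ⟨_, mapsToEdge_reattachHom_of_mem hd⟩

theorem isCoarseGrainTwoParallelEdges_mergeParallelEdges :
    IsCoarseGrainTwoParallelEdges (mergeParallelEdges hne hs ht) := by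
  have hnc : ∀ d, ¬ IsContractionEdge (mergeParallelEdges hne hs ht) d := fun d =>
    (exists_mapsToEdge_mergeParallelEdges hne hs ht d).choose_spec.not_isContractionEdge
  refine ⟨⟨isCoarseGraining_reattachHom Function.surjective_id fun _ _ => le_rfl,
    Function.injective_id, hnc⟩, Function.bijective_id, e₁, e₂, hne, hs, ht,
    ⟨_, mapsToEdge_reattachHom_of_mem hne, mapsToEdge_mergeParallelEdges_right hne hs ht⟩,
    fun h d d' hd hd' => ?_⟩
  rcases eq_or_of_mapsToEdge_mergeParallelEdges hne hs ht hd with hd | ⟨rfl, hd⟩ <;>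
    rcases eq_or_of_mapsToEdge_mergeParallelEdges hne hs ht hd' with hd' | ⟨rfl, hd'⟩
  · exact .inl (hd.symm.trans hd')
  · exact .inr ⟨.inl (hd.symm.trans hd'), .inr rfl⟩
  · exact .inr ⟨.inr rfl, .inl (hd'.symm.trans hd)⟩
  · exact .inl rfl

theorem isConstantOnFibers_mergeParallelEdges {φ : G ⟶ H}
    (himg : HEq (edgePath φ e₁) (edgePath φ e₂)) :
    IsConstantOnFibers (mergeParallelEdges hne hs ht) φ := by
  have heq_val : ∀ d h, MapsToEdge (mergeParallelEdges hne hs ht) d h →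
      HEq (edgePath φ d) (edgePath φ h.1) := by
    intro d h hm
    rcases eq_or_of_mapsToEdge_mergeParallelEdges hne hs ht hm with hd | ⟨rfl, hd⟩
    · rw [hd]
    · rw [hd]; exact himg.symm
  refine ⟨fun a b h => congrArg (vmap φ) h, fun d d' h hd hd' => (heq_val d h hd).trans
    (heq_val d' h hd').symm, fun d hd => absurd hd ?_⟩
  exact (exists_mapsToEdge_mergeParallelEdges hne hs ht d).choose_spec.not_isContractionEdge

theorem size_mergeParallelEdges : size (reattach id {e₂}ᶜ (reattachAcyclic_id _)) < size G := by
  rw [size_reattach, size]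
  have : Nat.card ({e₂}ᶜ : Set G.E) < Nat.card G.E :=
    Finite.card_subtype_lt (notMem_compl_singleton e₂)
  omega

end ParallelEdges

section MergeVertices

variable {w₁ w₂ : G.V} (hne : w₁ ≠ w₂)

theorem reattachAcyclic_collapse_univ {φ : G ⟶ H} (hφ : IsCoarseGraining φ)
    (hnc : ∀ e, ¬ IsContractionEdge φ e) (hw : vmap φ w₁ = vmap φ w₂) :
    ReattachAcyclic (collapse hne) Set.univ := by
  choose f hf using fun e => (isContractionEdge_or_exists_mapsToEdge (hφ.2 e)).resolve_left (hnc e)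
  refine noCycleData_of_map _ _ H (fun v => vmap φ v.1) (fun d => f d.1) (fun d => ?_)
    (fun d => ?_)
  · rw [apply_collapse hne hw]
    exact (hf d.1).vmap_src.symm
  · rw [apply_collapse hne hw]
    exact (hf d.1).vmap_tgt.symm

variable (hS : ReattachAcyclic (collapse hne) Set.univ)

noncomputable def mergeVertices : G ⟶ reattach _ _ hS :=
  reattachHom _ _ hS fun d hd => absurd (Set.mem_univ d) hd

theorem eq_of_mapsToEdge_mergeVertices {d : G.E} {h : (reattach _ _ hS).E}
    (hm : MapsToEdge (mergeVertices hne hS) d h) : h.1 = d :=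
  congrArg Subtype.val (eq_of_mapsToEdge_reattachHom hm (Set.mem_univ d))

theorem isMergeTwoVertices_mergeVertices : IsMergeTwoVertices (mergeVertices hne hS) := by
  have hmaps : ∀ d, MapsToEdge (mergeVertices hne hS) d ⟨d, Set.mem_univ d⟩ := fun d =>
    mapsToEdge_reattachHom_of_mem _
  refine ⟨⟨⟨isCoarseGraining_reattachHom (collapse_surjective hne) fun d hd => absurd
      (Set.mem_univ d) hd, fun h d d' hd hd' => ?_⟩, fun d => (hmaps d).not_isContractionEdge⟩,
    fun h => ⟨h.1, hmaps h.1, fun d hd => (eq_of_mapsToEdge_mergeVertices hne hS hd).symm⟩,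
    w₁, w₂, hne, (collapse_left hne).trans (collapse_right hne).symm,
    fun _ _ => eq_or_mem_of_collapse_eq hne⟩
  exact (eq_of_mapsToEdge_mergeVertices hne hS hd).symm.trans
    (eq_of_mapsToEdge_mergeVertices hne hS hd')

theorem isConstantOnFibers_mergeVertices {φ : G ⟶ H} (hw : vmap φ w₁ = vmap φ w₂) :
    IsConstantOnFibers (mergeVertices hne hS) φ where
  vmap_eq _ _ := apply_eq_of_collapse_eq hne hw
  heq_edgePath d d' h hd hd' := by
    rw [← eq_of_mapsToEdge_mergeVertices hne hS hd, eq_of_mapsToEdge_mergeVertices hne hS hd']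
  isContractionEdge d hd :=
    absurd hd (mapsToEdge_reattachHom_of_mem (Set.mem_univ d)).not_isContractionEdge

theorem size_mergeVertices : size (reattach _ _ hS) < size G := by
  rw [size_reattach, size, Nat.card_univ]
  have := card_collapse_lt (w₂ := w₂)
  omega

end MergeVertices

section ContractEdge

def IsCoveringEdge (e : G.E) : Prop :=
  ∀ d, Reaches G (G.src e) (G.src d) → Reaches G (G.tgt d) (G.tgt e) → d = e

abbrev reachesWithBackEdge (w₁ w₂ : G.V) : Preorder G.V where
  le x y := Reaches G x y ∨ (Reaches G x w₂ ∧ Reaches G w₁ y)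
  le_refl x := .inl (.refl x)
  le_trans x y z := by
    rintro (hxy | ⟨hx, hy⟩) (hyz | ⟨hy', hz⟩)
    exacts [.inl (hxy.trans hyz), .inr ⟨hxy.trans hy', hz⟩, .inr ⟨hx, hy.trans hyz⟩,
      .inr ⟨hx, hz⟩]

theorem reattachAcyclic_contract {e : G.E} (he : IsCoveringEdge e) :
    ReattachAcyclic (collapse (src_ne_tgt e)) {e}ᶜ := by
  let := reachesWithBackEdge (G.src e) (G.tgt e)
  let : Preorder {v : G.V // v ≠ G.tgt e} := Preorder.lift Subtype.val
  -- The endpoints of `e` are equivalent in this preorder and the other edges increase strictly.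
  have hequiv : ∀ v, (collapse (src_ne_tgt e) v).1 ≤ v ∧
      v ≤ (collapse (src_ne_tgt e) v).1 := by
    intro v
    rcases collapse_val_eq (src_ne_tgt e) (v := v) with h | ⟨rfl, h⟩ <;> rw [h]
    · exact ⟨le_rfl, le_rfl⟩
    · exact ⟨.inl (reaches_src_tgt e), .inr ⟨.refl _, .refl _⟩⟩
  refine noCycleData_of_lt _ _ fun d => ?_
  have hlt : G.src d.1 < G.tgt d.1 := by
    refine lt_of_le_not_ge (.inl (reaches_src_tgt d.1)) ?_
    rintro (h | ⟨h₂, h₁⟩)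
    · exact not_reaches_tgt_src d.1 h
    · exact d.2 (he d.1 h₁ h₂)
  exact (hequiv _).1.trans_lt (hlt.trans_le (hequiv _).2)

variable {e : G.E} (he : IsCoveringEdge e)

noncomputable def contractEdge : G ⟶ reattach _ _ (reattachAcyclic_contract he) :=
  reattachHom _ _ _ fun d hd => Quiver.Path.nil.cast rfl (by
    rw [(Set.notMem_compl_iff.1 hd : d = e), collapse_left, collapse_right])

theorem isContractionEdge_contractEdge_iff (d : G.E) :
    IsContractionEdge (contractEdge he) d ↔ d = e := by
  refine ⟨fun hd => of_not_not fun hne =>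
    not_isContractionEdge_reattachHom_of_mem (Set.mem_compl_singleton_iff.2 hne) hd, ?_⟩
  rintro rfl
  exact (congrArg Quiver.Path.length
    (edgePath_reattachHom_of_notMem (notMem_compl_singleton d))).trans (length_cast _ _ _)

theorem eq_of_mapsToEdge_contractEdge {d : G.E} {h : (reattach _ _ (reattachAcyclic_contract he)).E}
    (hm : MapsToEdge (contractEdge he) d h) : h.1 = d := by
  have hd : d ≠ e := fun hd =>
    hm.not_isContractionEdge ((isContractionEdge_contractEdge_iff he d).2 hd)
  exact congrArg Subtype.val (eq_of_mapsToEdge_reattachHom hm (Set.mem_compl_singleton_iff.2 hd))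

theorem connected_of_forall_eq_or_adj {N : CausalNet} (c : N.V)
    (h : ∀ x, x = c ∨ (undirected N).Adj c x) : Connected N := by
  have hc : ∀ x, (undirected N).Reachable c x := fun x =>
    (h x).elim (fun hx => by subst hx; rfl) (·.reachable)
  exact (SimpleGraph.connected_iff _).2 ⟨fun x y => (hc x).symm.trans (hc y), ⟨c⟩⟩

theorem connected_fiber_contractEdge (v : (reattach _ _ (reattachAcyclic_contract he)).V) :
    Connected (fiber (contractEdge he) v) := by
  refine connected_of_forall_eq_or_adj ⟨v.1, collapse_of_ne _ v.2⟩ fun x => ?_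
  have hxv : (collapse (src_ne_tgt e) x.1).1 = v.1 := congrArg Subtype.val x.2
  rcases collapse_val_eq (src_ne_tgt e) (v := x.1) with hx | ⟨hx, hx'⟩
  · exact .inl (Subtype.ext (hx.symm.trans hxv))
  · have hv : v.1 = G.src e := hxv.symm.trans hx'
    have hev : vmap (contractEdge he) (G.src e) = v :=
      (collapse_left _).trans (Subtype.ext hv.symm)
    refine .inr ⟨fun h => src_ne_tgt e (hv.symm.trans ((congrArg Subtype.val h).trans hx)),
      ⟨e, (isContractionEdge_contractEdge_iff he e).2 rfl, hev⟩,
      .inl ⟨Subtype.ext hv.symm, Subtype.ext hx.symm⟩⟩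

theorem isContractOneEdge_contractEdge : IsContractOneEdge (contractEdge he) := by
  have hcontr := isContractionEdge_contractEdge_iff he
  have hpair : ∀ d, G.src d = G.src e ∧ G.tgt d = G.tgt e ↔ d = e := fun d =>
    ⟨fun h => he d (h.1 ▸ .refl _) (h.2 ▸ .refl _), fun h => h ▸ ⟨rfl, rfl⟩⟩
  refine ⟨⟨⟨⟨isCoarseGraining_reattachHom (collapse_surjective _) fun _ _ =>
      (length_cast _ _ _).trans_le zero_le_one, fun h d d' hd hd' =>
      (eq_of_mapsToEdge_contractEdge he hd).symm.trans (eq_of_mapsToEdge_contractEdge he hd')⟩,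
    connected_fiber_contractEdge he⟩, G.src e, G.tgt e, src_ne_tgt e,
    (collapse_left _).trans (collapse_right _).symm, ⟨e, rfl, rfl⟩,
    fun d => (hcontr d).trans (hpair d).symm, fun _ _ => eq_or_mem_of_collapse_eq _⟩,
    fun w₁ w₂ hw => ?_⟩
  obtain ⟨hs, ht⟩ := (hw.2.2.2 e).1 ((hcontr e).2 rfl)
  exact ⟨e, ⟨hs, ht⟩, fun d hd => (hpair d).1 ⟨hd.1.trans hs.symm, hd.2.trans ht.symm⟩⟩

theorem isConstantOnFibers_contractEdge {φ : G ⟶ H} (hφ : IsContractionEdge φ e) :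
    IsConstantOnFibers (contractEdge he) φ where
  vmap_eq _ _ := apply_eq_of_collapse_eq _ (Quiver.Path.eq_of_length_zero _ hφ)
  heq_edgePath d d' h hd hd' := by
    rw [← eq_of_mapsToEdge_contractEdge he hd, eq_of_mapsToEdge_contractEdge he hd']
  isContractionEdge d hd := (isContractionEdge_contractEdge_iff he d).1 hd ▸ hφ

theorem size_contractEdge : size (reattach _ _ (reattachAcyclic_contract he)) < size G := by
  rw [size_reattach, size]
  have := card_collapse_lt (w₂ := G.tgt e)
  have : Nat.card ({e}ᶜ : Set G.E) < Nat.card G.E :=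
    Finite.card_subtype_lt (notMem_compl_singleton e)
  omega

end ContractEdge

section Induction

def IdentifiesParallelEdges (φ : G ⟶ H) : Prop :=
  ∃ e₁ e₂, e₁ ≠ e₂ ∧ G.src e₁ = G.src e₂ ∧ G.tgt e₁ = G.tgt e₂ ∧
    HEq (edgePath φ e₁) (edgePath φ e₂)

theorem isContractionEdge_of_mem_pathEdges (φ : G ⟶ H) {a b : G.V} (p : Quiver.Path a b)
    (hab : vmap φ a = vmap φ b) {d : G.E} (hd : d ∈ pathEdges p) : IsContractionEdge φ d := by
  have h0 := length_eq_zero_of_eq (pmap φ p) hab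
  rw [length_pmap, List.sum_eq_zero_iff] at h0
  exact h0 _ (List.mem_map_of_mem hd)

theorem exists_isCoveringEdge {φ : G ⟶ H} (hpar : ¬ IdentifiesParallelEdges φ)
    (hcon : ∃ e, IsContractionEdge φ e) :
    ∃ e, IsContractionEdge φ e ∧ IsCoveringEdge e := by
  -- A contracted edge whose endpoints have minimal rank difference is covering.
  obtain ⟨e, he, hmin⟩ := Set.exists_min_image {e | IsContractionEdge φ e}
    (fun e => rank G (G.tgt e) - rank G (G.src e)) (Set.toFinite _) hcon
  refine ⟨e, he, fun d hs ht => of_not_not fun hne => ?_⟩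
  have hd : IsContractionEdge φ d := by
    obtain ⟨p⟩ := hs
    obtain ⟨q⟩ := ht
    refine isContractionEdge_of_mem_pathEdges φ ((p.comp (edgeHom G d).toPath).comp q)
      (Quiver.Path.eq_of_length_zero _ he) ?_
    simp [pathEdges_comp, homEdge, edgeHom]
  have hmin := hmin d hd
  have := rank_le_rank hs
  have := rank_le_rank ht
  have := rank_lt_rank (reaches_src_tgt d) (src_ne_tgt d)
  by_cases hsrc : G.src e = G.src d
  · by_cases htgt : G.tgt d = G.tgt e
    · exact hpar ⟨d, e, hne, hsrc.symm, htgt,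
        heq_of_length_eq_zero (congrArg _ hsrc.symm) hd he⟩
    · have := rank_lt_rank ht htgt
      omega
  · have := rank_lt_rank hs hsrc
    omega

theorem isConstantOnFibers_id {φ : G ⟶ H} (hpar : ¬ IdentifiesParallelEdges φ)
    (hnc : ∀ e, ¬ IsContractionEdge φ e) (hinj : Function.Injective (vmap φ)) :
    IsConstantOnFibers φ (𝟙 G) where
  vmap_eq _ _ h := hinj h
  heq_edgePath d d' h hd hd' := by
    obtain rfl : d = d' := of_not_not fun hne => hpar ⟨d, d', hne,
      hinj (hd.vmap_src.trans hd'.vmap_src.symm), hinj (hd.vmap_tgt.trans hd'.vmap_tgt.symm),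
      hd.heq.trans hd'.heq.symm⟩
    rfl
  isContractionEdge d hd := absurd hd (hnc d)

theorem IsCoarseGraining.isIso_or_exists_fundamental {φ : G ⟶ H} (hφ : IsCoarseGraining φ) :
    IsIso φ ∨ ∃ (K : CausalNet) (μ : G ⟶ K),
      IsFundamentalCoarseGraining μ ∧ IsConstantOnFibers μ φ ∧ size K < size G := by
  by_cases hpar : IdentifiesParallelEdges φ
  · obtain ⟨e₁, e₂, hne, hs, ht, himg⟩ := hpar
    exact .inr ⟨_, _, .inr (.inr (.inl (isCoarseGrainTwoParallelEdges_mergeParallelEdges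
      hne hs ht))), isConstantOnFibers_mergeParallelEdges hne hs ht himg,
      size_mergeParallelEdges⟩
  by_cases hcon : ∃ e, IsContractionEdge φ e
  · obtain ⟨e, he, hcov⟩ := exists_isCoveringEdge hpar hcon
    exact .inr ⟨_, _, .inr (.inr (.inr (isContractOneEdge_contractEdge hcov))),
      isConstantOnFibers_contractEdge hcov he, size_contractEdge hcov⟩
  have hnc : ∀ e, ¬ IsContractionEdge φ e := fun e he => hcon ⟨e, he⟩
  by_cases hinj : Function.Injective (vmap φ)
  · exact .inl (hφ.isIso_of_isConstantOnFibers_id (isConstantOnFibers_id hpar hnc hinj))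
  · obtain ⟨w₁, w₂, hw, hne⟩ := Function.not_injective_iff.1 hinj
    have hS := reattachAcyclic_collapse_univ hne hφ hnc hw
    exact .inr ⟨_, _, .inr (.inl (isMergeTwoVertices_mergeVertices hne hS)),
      isConstantOnFibers_mergeVertices hne hS hw, size_mergeVertices hne hS⟩

theorem IsCoarseGraining.isCompOf {φ : G ⟶ H} (hφ : IsCoarseGraining φ) :
    IsCompOf IsFundamentalCoarseGraining φ := by
  induction hn : size G using Nat.strong_induction_on generalizing G with
  | _ n ih =>
    rcases hφ.isIso_or_exists_fundamental with hiso | ⟨K, μ, hμ, hφμ, hK⟩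
    · exact .of φ (.inl hiso)
    · obtain ⟨ψ, hψ, rfl⟩ := hφμ.exists_comp_eq hμ.isCoarseGraining hφ
      exact .comp μ ψ (.of μ hμ) (ih _ (hn ▸ hK) hψ rfl)

end Induction

theorem coarseGraining_iff_comp_fundamental {G H : CausalNet} (lam : G ⟶ H) :
    IsCoarseGraining lam ↔ IsCompOf IsFundamentalCoarseGraining lam :=
  ⟨IsCoarseGraining.isCompOf, IsCompOf.isCoarseGraining⟩

end CausalNets
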